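/- arXiv:2106.07184 — 2 statements merged into one kernel-verified Lean document; each statement's English description precedes it below -/
import Mathlib

section
/- For every d > 0 and every α ∈ ℝ, the equation F_d^D(λ) = α has exactly one solution λ in the interval (-∞, (2π/d)²); note that (-∞, (2π/d)²) is disjoint from Π_d^D, so F_d^D is defined on all of this interval. -/
/-- The set `Π_d^D = { (2πk/d)² : k ∈ ℕ, k ≥ 1 }`. -/
noncomputable def PiD (d : ℝ) : Set ℝ :=
  {x | ∃ k : ℕ, 1 ≤ k ∧ x = (2 * Real.pi * k / d) ^ 2}

/-- The function `F_d^D`. -/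
noncomputable def FD (d lam : ℝ) : ℝ :=
  if 0 < lam then
    -2 * Real.sqrt lam * (Real.cos (d * Real.sqrt lam / 2) / Real.sin (d * Real.sqrt lam / 2))
  else if lam = 0 then -4 / d
  else
    -2 * Real.sqrt (-lam) *
      (Real.cosh (d * Real.sqrt (-lam) / 2) / Real.sinh (d * Real.sqrt (-lam) / 2))



noncomputable def gH (s : ℝ) : ℝ := s * Real.cosh s / Real.sinh s
noncomputable def gC (t : ℝ) : ℝ := t * Real.cos t / Real.sin t

lemma L1 {x : ℝ} (hx : 0 < x) : Real.sinh x < x * Real.cosh x := by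
  have hmono : StrictMonoOn (fun x => x * Real.cosh x - Real.sinh x) (Set.Ici 0) := by
    apply strictMonoOn_of_deriv_pos (convex_Ici 0)
    · fun_prop
    · intro x hx
      rw [interior_Ici] at hx
      have h1 : HasDerivAt (fun x => x * Real.cosh x - Real.sinh x)
          (1 * Real.cosh x + x * Real.sinh x - Real.cosh x) x :=
        ((hasDerivAt_id x).mul (Real.hasDerivAt_cosh x)).sub (Real.hasDerivAt_sinh x)
      rw [h1.deriv]
      have := Real.sinh_pos_iff.mpr hx
      nlinarith [mul_pos hx this]
  have := hmono (Set.self_mem_Ici) (Set.mem_Ici.mpr hx.le) hx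
  simp at this
  linarith

lemma L2 {x : ℝ} (hx : 0 < x) (hx' : x < Real.pi) : x * Real.cos x < Real.sin x := by
  have hmono : StrictMonoOn (fun x => Real.sin x - x * Real.cos x) (Set.Icc 0 Real.pi) := by
    apply strictMonoOn_of_deriv_pos (convex_Icc 0 Real.pi)
    · fun_prop
    · intro x hx
      rw [interior_Icc] at hx
      have h1 : HasDerivAt (fun x => Real.sin x - x * Real.cos x)
          (Real.cos x - (1 * Real.cos x + x * -Real.sin x)) x :=
        (Real.hasDerivAt_sin x).sub ((hasDerivAt_id x).mul (Real.hasDerivAt_cos x))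
      rw [h1.deriv]
      have := Real.sin_pos_of_pos_of_lt_pi hx.1 hx.2
      nlinarith [mul_pos hx.1 this]
  have := hmono (Set.left_mem_Icc.mpr Real.pi_pos.le) (Set.mem_Icc.mpr ⟨hx.le, hx'.le⟩) hx
  simp at this
  linarith

lemma gH_gt_one {s : ℝ} (hs : 0 < s) : 1 < gH s := by
  have h := Real.sinh_pos_iff.mpr hs
  rw [gH, lt_div_iff₀ h, one_mul]
  exact L1 hs

lemma gC_lt_one {t : ℝ} (ht : 0 < t) (ht' : t < Real.pi) : gC t < 1 := by
  have h := Real.sin_pos_of_pos_of_lt_pi ht ht'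
  rw [gC, div_lt_iff₀ h, one_mul]
  exact L2 ht ht'

lemma gH_mono : StrictMonoOn gH (Set.Ioi 0) := by
  apply strictMonoOn_of_deriv_pos (convex_Ioi 0)
  · apply ContinuousOn.div (by fun_prop) (by fun_prop)
    intro x hx
    exact (Real.sinh_pos_iff.mpr hx).ne'
  · intro x hx
    rw [interior_Ioi] at hx
    have hs := Real.sinh_pos_iff.mpr hx
    have h1 : HasDerivAt gH
        (((1 * Real.cosh x + x * Real.sinh x) * Real.sinh x - x * Real.cosh x * Real.cosh x)
          / Real.sinh x ^ 2) x :=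
      (((hasDerivAt_id x).mul (Real.hasDerivAt_cosh x)).div (Real.hasDerivAt_sinh x) hs.ne')
    rw [h1.deriv]
    apply div_pos ?_ (by positivity)
    have h2 : Real.cosh x ^ 2 - Real.sinh x ^ 2 = 1 := Real.cosh_sq_sub_sinh_sq x
    have h3 : x < Real.sinh x := Real.self_lt_sinh_iff.mpr hx
    have h4 : 1 ≤ Real.cosh x := Real.one_le_cosh x
    nlinarith

lemma gC_anti : StrictAntiOn gC (Set.Ioo 0 Real.pi) := by
  apply strictAntiOn_of_deriv_neg (convex_Ioo 0 Real.pi)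
  · apply ContinuousOn.div (by fun_prop) (by fun_prop)
    intro x hx
    exact (Real.sin_pos_of_pos_of_lt_pi hx.1 hx.2).ne'
  · intro x hx
    rw [interior_Ioo] at hx
    have hs := Real.sin_pos_of_pos_of_lt_pi hx.1 hx.2
    have h1 : HasDerivAt gC
        (((1 * Real.cos x + x * -Real.sin x) * Real.sin x - x * Real.cos x * Real.cos x)
          / Real.sin x ^ 2) x :=
      (((hasDerivAt_id x).mul (Real.hasDerivAt_cos x)).div (Real.hasDerivAt_sin x) hs.ne')
    rw [h1.deriv]
    apply div_neg_of_neg_of_pos ?_ (by positivity)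
    have h2 : Real.sin x ^ 2 + Real.cos x ^ 2 = 1 := Real.sin_sq_add_cos_sq x
    have h3 : Real.sin x < x := Real.sin_lt hx.1
    have h4 : Real.cos x ≤ 1 := Real.cos_le_one x
    nlinarith

lemma gH_surj {a : ℝ} (ha : 1 < a) : ∃ s, 0 < s ∧ gH s = a := by
  set s₁ := Real.log a / 2 with hs₁def
  have hs₁ : 0 < s₁ := by
    have := Real.log_pos ha
    positivity
  have hH1 : gH s₁ < a := by
    have hsh := Real.sinh_pos_iff.mpr hs₁
    have h1 : s₁ < Real.sinh s₁ := Real.self_lt_sinh_iff.mpr hs₁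
    have h2 : Real.cosh s₁ < Real.exp s₁ := by
      rw [Real.cosh_eq]
      have : Real.exp (-s₁) < Real.exp s₁ := Real.exp_lt_exp.mpr (by linarith)
      linarith
    have h3 : Real.exp s₁ < a := by
      have he : Real.exp s₁ * Real.exp s₁ = a := by
        rw [← Real.exp_add]
        rw [hs₁def]
        rw [show Real.log a / 2 + Real.log a / 2 = Real.log a by ring]
        exact Real.exp_log (by linarith)
      have h1e : 1 < Real.exp s₁ := by
        rw [show (1:ℝ) = Real.exp 0 by simp]
        exact Real.exp_lt_exp.mpr hs₁
      nlinarith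
    have hch : 0 < Real.cosh s₁ := Real.cosh_pos s₁
    have : gH s₁ < Real.cosh s₁ := by
      rw [gH, div_lt_iff₀ hsh]
      nlinarith
    linarith
  have hmax : ∀ s : ℝ, 0 < s → s < gH s := by
    intro s hs
    have hsh := Real.sinh_pos_iff.mpr hs
    rw [gH, lt_div_iff₀ hsh]
    have := Real.sinh_lt_cosh s
    nlinarith
  set s₂ := max a (s₁ + 1) with hs₂def
  have hs₁₂ : s₁ ≤ s₂ := le_trans (by linarith) (le_max_right _ _)
  have hs₂pos : 0 < s₂ := lt_of_lt_of_le (by linarith) hs₁₂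
  have hH2 : a < gH s₂ := lt_of_le_of_lt (le_max_left _ _) (hmax s₂ hs₂pos)
  have hcont : ContinuousOn gH (Set.Icc s₁ s₂) := by
    apply ContinuousOn.div (by fun_prop) (by fun_prop)
    intro x hx
    exact (Real.sinh_pos_iff.mpr (lt_of_lt_of_le hs₁ hx.1)).ne'
  obtain ⟨s, hsmem, hseq⟩ := intermediate_value_Icc hs₁₂ hcont ⟨hH1.le, hH2.le⟩
  exact ⟨s, lt_of_lt_of_le hs₁ hsmem.1, hseq⟩

lemma gC_surj {a : ℝ} (ha : a < 1) : ∃ t, 0 < t ∧ t < Real.pi ∧ gC t = a := by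
  have hπ := Real.pi_gt_three
  set t₁ := min (Real.pi / 4) (Real.sqrt (1 - a)) with ht₁def
  have hsq : 0 < Real.sqrt (1 - a) := Real.sqrt_pos.mpr (by linarith)
  have ht₁ : 0 < t₁ := lt_min (by linarith) hsq
  have ht₁le : t₁ ≤ Real.pi / 4 := min_le_left _ _
  have hcos₁ : a < Real.cos t₁ := by
    have h1 : t₁ ^ 2 ≤ 1 - a := by
      have h2 : t₁ ≤ Real.sqrt (1 - a) := min_le_right _ _
      calc t₁ ^ 2 ≤ Real.sqrt (1 - a) ^ 2 := by nlinarith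
        _ = 1 - a := Real.sq_sqrt (by linarith)
    have := Real.one_sub_sq_div_two_le_cos (x := t₁)
    linarith
  have hcos₁pos : 0 < Real.cos t₁ := by
    have : t₁ ∈ Set.Ioo (-(Real.pi/2)) (Real.pi/2) := Set.mem_Ioo.mpr ⟨by linarith, by linarith⟩
    exact Real.cos_pos_of_mem_Ioo this
  have hsin₁ : 0 < Real.sin t₁ := Real.sin_pos_of_pos_of_lt_pi ht₁ (by linarith)
  have hC1 : a < gC t₁ := by
    have hlt : Real.sin t₁ < t₁ := Real.sin_lt ht₁
    have : Real.cos t₁ ≤ gC t₁ := by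
      rw [gC, le_div_iff₀ hsin₁]
      nlinarith
    linarith
  -- t₂
  set ε := min (Real.pi / 4) (1 / (1 + |a|)) with hεdef
  have hε : 0 < ε := lt_min (by linarith) (by positivity)
  have hεle : ε ≤ Real.pi / 4 := min_le_left _ _
  have hεle2 : ε ≤ 1 / (1 + |a|) := min_le_right _ _
  set t₂ := Real.pi - ε with ht₂def
  have ht₂lt : t₂ < Real.pi := by simp [ht₂def]; linarith
  have ht₂pos : 0 < t₂ := by simp [ht₂def]; linarith
  have hsinε : 0 < Real.sin ε := Real.sin_pos_of_pos_of_lt_pi hε (by linarith)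
  have hcosε : 1 / 2 ≤ Real.cos ε := by
    have := Real.one_sub_sq_div_two_le_cos (x := ε)
    nlinarith [Real.pi_lt_d2]
  have hkey : -a * Real.sin ε < (Real.pi - ε) * Real.cos ε := by
    have h1 : -a * Real.sin ε ≤ |a| * Real.sin ε := by
      apply mul_le_mul_of_nonneg_right _ hsinε.le
      exact neg_le_abs a
    have h2 : |a| * Real.sin ε ≤ |a| * ε := by
      apply mul_le_mul_of_nonneg_left (Real.sin_lt hε).le (abs_nonneg a)
    have h3 : |a| * ε ≤ |a| * (1 / (1 + |a|)) :=
      mul_le_mul_of_nonneg_left hεle2 (abs_nonneg a)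
    have h4 : |a| * (1 / (1 + |a|)) < 1 := by
      rw [mul_one_div, div_lt_one (by positivity)]
      linarith [abs_nonneg a]
    have h5 : (1 : ℝ) ≤ (Real.pi - ε) * Real.cos ε := by nlinarith
    linarith
  have hC2 : gC t₂ < a := by
    rw [gC, ht₂def, Real.cos_pi_sub, Real.sin_pi_sub, div_lt_iff₀ hsinε]
    nlinarith
  have ht₁₂ : t₁ ≤ t₂ := by
    rw [ht₂def]; linarith
  have hsub : Set.Icc t₁ t₂ ⊆ Set.Ioo 0 Real.pi := fun x hx =>
    ⟨lt_of_lt_of_le ht₁ hx.1, lt_of_le_of_lt hx.2 ht₂lt⟩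
  have hcont : ContinuousOn gC (Set.Icc t₁ t₂) := by
    apply ContinuousOn.div (by fun_prop) (by fun_prop)
    intro x hx
    exact (Real.sin_pos_of_pos_of_lt_pi (hsub hx).1 (hsub hx).2).ne'
  obtain ⟨t, htmem, hteq⟩ := intermediate_value_Icc' ht₁₂ hcont ⟨hC2.le, hC1.le⟩
  exact ⟨t, (hsub htmem).1, (hsub htmem).2, hteq⟩


lemma FD_neg {d lam : ℝ} (hd : 0 < d) (hl : lam < 0) :
    FD d lam = -(4/d) * gH (d * Real.sqrt (-lam) / 2) := by
  rw [FD, if_neg (by linarith), if_neg (by linarith), gH]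
  rw [show d * Real.sqrt (-lam) / 2 * Real.cosh (d * Real.sqrt (-lam) / 2) /
        Real.sinh (d * Real.sqrt (-lam) / 2) =
      (d * Real.sqrt (-lam) / 2) * (Real.cosh (d * Real.sqrt (-lam) / 2) /
        Real.sinh (d * Real.sqrt (-lam) / 2)) from by ring, ← mul_assoc]
  congr 1
  field_simp
  ring

lemma FD_pos {d lam : ℝ} (hd : 0 < d) (hl : 0 < lam) :
    FD d lam = -(4/d) * gC (d * Real.sqrt lam / 2) := by
  rw [FD, if_pos hl, gC]
  rw [show d * Real.sqrt lam / 2 * Real.cos (d * Real.sqrt lam / 2) /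
        Real.sin (d * Real.sqrt lam / 2) =
      (d * Real.sqrt lam / 2) * (Real.cos (d * Real.sqrt lam / 2) /
        Real.sin (d * Real.sqrt lam / 2)) from by ring, ← mul_assoc]
  congr 1
  field_simp
  ring

lemma FD_zero {d : ℝ} : FD d 0 = -4 / d := by
  rw [FD, if_neg (by norm_num), if_pos rfl]

/-- For every `d > 0` and every `α ∈ ℝ`, the equation `F_d^D(λ) = α` has exactly one solution
`λ ∈ (-∞, (2π/d)²)`; moreover `(-∞, (2π/d)²)` is disjoint from `Π_d^D`, so `F_d^D` is
defined on all of this interval. -/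
theorem stmt2 (d : ℝ) (hd : 0 < d) (α : ℝ) :
    Set.Iio ((2 * Real.pi / d) ^ 2) ∩ PiD d = ∅ ∧
    ∃! lam : ℝ, lam < (2 * Real.pi / d) ^ 2 ∧ FD d lam = α := by
  have hπ := Real.pi_pos
  constructor
  · ext x
    simp only [Set.mem_inter_iff, Set.mem_Iio, PiD, Set.mem_setOf_eq,
      Set.mem_empty_iff_false, iff_false, not_and]
    rintro hlt ⟨k, hk, rfl⟩
    have hk1 : (1:ℝ) ≤ (k : ℝ) := by exact_mod_cast hk
    have h0 : (0:ℝ) ≤ 2*Real.pi/d := by positivity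
    have h2 : (2*Real.pi*(k:ℝ)/d)^2 = (2*Real.pi/d)^2 * (k:ℝ)^2 := by ring
    have h3 : (0:ℝ) < (2*Real.pi/d)^2 := by positivity
    have h4 : (1:ℝ) ≤ (k:ℝ)^2 := by nlinarith
    nlinarith
  · have hd4 : (-(4/d) : ℝ) ≠ 0 := neg_ne_zero.mpr (by positivity)
    set a := -(d * α) / 4 with hadef
    have haα : -(4/d) * a = α := by rw [hadef]; field_simp
    -- sign facts
    have sneg : ∀ lam : ℝ, lam < 0 → FD d lam < -4/d := by
      intro lam hl
      rw [FD_neg hd hl]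
      have h1 : 1 < gH (d * Real.sqrt (-lam) / 2) := by
        apply gH_gt_one
        have := Real.sqrt_pos.mpr (show 0 < -lam by linarith)
        positivity
      have hneg4 : -(4/d) < 0 := by
        have : (0:ℝ) < 4/d := by positivity
        linarith
      have := mul_lt_mul_of_neg_left h1 hneg4
      simpa [neg_div] using this
    have spos : ∀ lam : ℝ, 0 < lam → lam < (2 * Real.pi / d) ^ 2 → -4/d < FD d lam := by
      intro lam hl hl2
      rw [FD_pos hd hl]
      have hsq : 0 < Real.sqrt lam := Real.sqrt_pos.mpr hl
      have htπ : d * Real.sqrt lam / 2 < Real.pi := by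
        have h0 : (0:ℝ) ≤ 2 * Real.pi / d := by positivity
        have h1 : Real.sqrt lam < 2 * Real.pi / d := by
          have := Real.sqrt_lt_sqrt hl.le hl2
          rwa [Real.sqrt_sq h0] at this
        have h2 : d * (2 * Real.pi / d) = 2 * Real.pi := by field_simp
        nlinarith [mul_lt_mul_of_pos_left h1 hd]
      have h1 : gC (d * Real.sqrt lam / 2) < 1 := gC_lt_one (by positivity) htπ
      have hneg4 : -(4/d) < 0 := by
        have : (0:ℝ) < 4/d := by positivity
        linarith
      have := mul_lt_mul_of_neg_left h1 hneg4
      simpa [neg_div] using this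
    rcases lt_trichotomy α (-4/d) with hα | hα | hα
    · -- a > 1, solution negative
      have haa : 1 < a := by
        have : α * d < -4 := by
          have := mul_lt_mul_of_pos_right hα hd
          rwa [div_mul_cancel₀ (-4 : ℝ) hd.ne'] at this
        rw [hadef]; nlinarith
      obtain ⟨s, hs, hgs⟩ := gH_surj haa
      refine ⟨-(2*s/d)^2, ⟨?_, ?_⟩, ?_⟩
      · have h1 : (0:ℝ) < (2*s/d)^2 := by positivity
        have h2 : (0:ℝ) < (2 * Real.pi / d) ^ 2 := by positivity
        linarith
      · have hneg : -(2*s/d)^2 < 0 := by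
          have : (0:ℝ) < (2*s/d)^2 := by positivity
          linarith
        rw [FD_neg hd hneg]
        have hsq : Real.sqrt (-(-(2*s/d)^2)) = 2*s/d := by
          rw [neg_neg, Real.sqrt_sq (by positivity)]
        rw [hsq]
        have : d * (2*s/d) / 2 = s := by field_simp
        rw [this, hgs, haα]
      · rintro lam' ⟨hlt', heq'⟩
        have hl'neg : lam' < 0 := by
          rcases lt_trichotomy lam' 0 with h | h | h
          · exact h
          · exfalso; rw [h, FD_zero] at heq'; linarith
          · exfalso; have := spos lam' h hlt'; linarith
        rw [FD_neg hd hl'neg] at heq'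
        have hs' : 0 < d * Real.sqrt (-lam') / 2 := by
          have := Real.sqrt_pos.mpr (show 0 < -lam' by linarith)
          positivity
        have heqg : gH (d * Real.sqrt (-lam') / 2) = a := by
          have := heq'.trans haα.symm
          exact mul_left_cancel₀ hd4 this
        have hss : d * Real.sqrt (-lam') / 2 = s :=
          gH_mono.injOn hs' hs (heqg.trans hgs.symm)
        have hsqrt : Real.sqrt (-lam') = 2*s/d := by
          field_simp at hss
          field_simp
          linarith
        have : -lam' = (2*s/d)^2 := by
          rw [← hsqrt, Real.sq_sqrt (by linarith)]
        linarith
    · -- α = -4/d, lam = 0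
      refine ⟨0, ⟨by positivity, by rw [FD_zero, hα]⟩, ?_⟩
      rintro lam' ⟨hlt', heq'⟩
      rcases lt_trichotomy lam' 0 with h | h | h
      · exfalso; have := sneg lam' h; rw [heq'] at this; linarith
      · exact h
      · exfalso; have := spos lam' h hlt'; rw [heq'] at this; linarith
    · -- a < 1, solution positive
      have haa : a < 1 := by
        have : -4 < α * d := by
          have := mul_lt_mul_of_pos_right hα hd
          rwa [div_mul_cancel₀ (-4 : ℝ) hd.ne'] at this
        rw [hadef]; nlinarith
      obtain ⟨t, ht0, htπ, hgt⟩ := gC_surj haa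
      refine ⟨(2*t/d)^2, ⟨?_, ?_⟩, ?_⟩
      · have h1 : 2*t/d < 2*Real.pi/d := by gcongr
        have h0 : (0:ℝ) ≤ 2*t/d := by positivity
        nlinarith
      · have hl : (0:ℝ) < (2*t/d)^2 := by positivity
        rw [FD_pos hd hl]
        have hsq : Real.sqrt ((2*t/d)^2) = 2*t/d := Real.sqrt_sq (by positivity)
        rw [hsq]
        have : d * (2*t/d) / 2 = t := by field_simp
        rw [this, hgt, haα]
      · rintro lam' ⟨hlt', heq'⟩
        have hl'pos : 0 < lam' := by
          rcases lt_trichotomy lam' 0 with h | h | h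
          · exfalso; have := sneg lam' h; rw [heq'] at this; linarith
          · exfalso; rw [h, FD_zero] at heq'; linarith
          · exact h
        rw [FD_pos hd hl'pos] at heq'
        have hsq' : 0 < Real.sqrt lam' := Real.sqrt_pos.mpr hl'pos
        have ht' : d * Real.sqrt lam' / 2 < Real.pi := by
          have h0 : (0:ℝ) ≤ 2 * Real.pi / d := by positivity
          have h1 : Real.sqrt lam' < 2 * Real.pi / d := by
            have := Real.sqrt_lt_sqrt hl'pos.le hlt'
            rwa [Real.sqrt_sq h0] at this
          have h2 : d * (2 * Real.pi / d) = 2 * Real.pi := by field_simp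
          nlinarith [mul_lt_mul_of_pos_left h1 hd]
        have heqg : gC (d * Real.sqrt lam' / 2) = a := by
          have := heq'.trans haα.symm
          exact mul_left_cancel₀ hd4 this
        have hmem1 : d * Real.sqrt lam' / 2 ∈ Set.Ioo 0 Real.pi := ⟨by positivity, ht'⟩
        have hmem2 : t ∈ Set.Ioo 0 Real.pi := ⟨ht0, htπ⟩
        have htt : d * Real.sqrt lam' / 2 = t :=
          gC_anti.injOn hmem1 hmem2 (heqg.trans hgt.symm)
        have hsqrt : Real.sqrt lam' = 2*t/d := by
          field_simp at htt
          field_simp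
          linarith
        have : lam' = (2*t/d)^2 := by
          rw [← hsqrt, Real.sq_sqrt hl'pos.le]
        linarith
end

section
/- Let x_- < x_+ be real numbers, d = x_+ - x_-, y = (x_- + x_+)/2, and let α ∈ ℝ. Then the set of λ < (2π/d)² for which a δ-Dirichlet eigenfunction for (α, λ) exists is exactly {Λ^D_{α,d}}; the complex vector space consisting of 0 and all δ-Dirichlet eigenfunctions for (α, Λ^D_{α,d}) is one-dimensional; and for λ = (2π/d)² a δ-Dirichlet eigenfunction exists for every α ∈ ℝ. -/
/-- `u` is a δ-Dirichlet eigenfunction for `(α, λ)` on `[x₋, x₊]`. -/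
def IsDeltaDirichletEF (xm xp α lam : ℝ) (u : ℝ → ℂ) : Prop :=
  ContinuousOn u (Set.Icc xm xp) ∧
  (∃ x ∈ Set.Icc xm xp, u x ≠ 0) ∧
  u xm = 0 ∧ u xp = 0 ∧
  ∃ v w : ℝ → ℂ,
    ContDiff ℝ 2 v ∧ ContDiff ℝ 2 w ∧
    Set.EqOn u v (Set.Icc xm ((xm + xp) / 2)) ∧
    Set.EqOn u w (Set.Icc ((xm + xp) / 2) xp) ∧
    (∀ x ∈ Set.Icc xm ((xm + xp) / 2), -(deriv (deriv v) x) = (lam : ℂ) * v x) ∧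
    (∀ x ∈ Set.Icc ((xm + xp) / 2) xp, -(deriv (deriv w) x) = (lam : ℂ) * w x) ∧
    deriv w ((xm + xp) / 2) - deriv v ((xm + xp) / 2) = (α : ℂ) * u ((xm + xp) / 2)

section DeltaAux

open Real Set

/-- cosine-type solution of `-u'' = λ u`, `C 0 = 1`, `C' 0 = 0`. -/
noncomputable def Cf (l t : ℝ) : ℂ :=
  if 0 ≤ l then ((Real.cos (Real.sqrt l * t) : ℝ) : ℂ)
  else ((Real.cosh (Real.sqrt (-l) * t) : ℝ) : ℂ)

/-- sine-type solution of `-u'' = λ u`, `S 0 = 0`, `S' 0 = 1`. -/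
noncomputable def Sf (l t : ℝ) : ℂ :=
  if 0 < l then ((Real.sin (Real.sqrt l * t) / Real.sqrt l : ℝ) : ℂ)
  else if l = 0 then ((t : ℝ) : ℂ)
  else ((Real.sinh (Real.sqrt (-l) * t) / Real.sqrt (-l) : ℝ) : ℂ)

lemma Cf_zero (l : ℝ) : Cf l 0 = 1 := by
  unfold Cf; split <;> simp

lemma Sf_zero (l : ℝ) : Sf l 0 = 0 := by
  unfold Sf; split
  · simp
  · split <;> simp

lemma hasDerivAt_Sf (l t : ℝ) : HasDerivAt (Sf l) (Cf l t) t := by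
  rcases lt_trichotomy l 0 with hl | hl | hl
  · have hS : Sf l = fun t => ((Real.sinh (Real.sqrt (-l) * t) / Real.sqrt (-l) : ℝ) : ℂ) := by
      funext x; unfold Sf; rw [if_neg (by linarith), if_neg (by linarith)]
    have hC : Cf l t = ((Real.cosh (Real.sqrt (-l) * t) : ℝ) : ℂ) := by
      unfold Cf; rw [if_neg (by linarith)]
    rw [hS, hC]
    have hs : Real.sqrt (-l) ≠ 0 := by
      have : 0 < -l := by linarith
      positivity
    have h1 : HasDerivAt (fun x : ℝ => Real.sqrt (-l) * x) (Real.sqrt (-l)) t := by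
      simpa using (hasDerivAt_id t).const_mul (Real.sqrt (-l))
    have h2 := ((Real.hasDerivAt_sinh (Real.sqrt (-l) * t)).comp t h1).div_const (Real.sqrt (-l))
    have h3 : Real.cosh (Real.sqrt (-l) * t) * Real.sqrt (-l) / Real.sqrt (-l)
        = Real.cosh (Real.sqrt (-l) * t) := by field_simp
    rw [h3] at h2
    exact h2.ofReal_comp
  · subst hl
    have hS : Sf 0 = fun t : ℝ => ((t : ℝ) : ℂ) := by
      funext x; unfold Sf; rw [if_neg (by norm_num), if_pos rfl]
    have hC : Cf 0 t = 1 := by unfold Cf; simp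
    rw [hS, hC]
    exact (hasDerivAt_id t).ofReal_comp
  · have hS : Sf l = fun t => ((Real.sin (Real.sqrt l * t) / Real.sqrt l : ℝ) : ℂ) := by
      funext x; unfold Sf; rw [if_pos hl]
    have hC : Cf l t = ((Real.cos (Real.sqrt l * t) : ℝ) : ℂ) := by
      unfold Cf; rw [if_pos hl.le]
    rw [hS, hC]
    have hs : Real.sqrt l ≠ 0 := by positivity
    have h1 : HasDerivAt (fun x : ℝ => Real.sqrt l * x) (Real.sqrt l) t := by
      simpa using (hasDerivAt_id t).const_mul (Real.sqrt l)
    have h2 := ((Real.hasDerivAt_sin (Real.sqrt l * t)).comp t h1).div_const (Real.sqrt l)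
    have h3 : Real.cos (Real.sqrt l * t) * Real.sqrt l / Real.sqrt l
        = Real.cos (Real.sqrt l * t) := by field_simp
    rw [h3] at h2
    exact h2.ofReal_comp

lemma hasDerivAt_Cf (l t : ℝ) : HasDerivAt (Cf l) (-(l : ℂ) * Sf l t) t := by
  rcases lt_trichotomy l 0 with hl | hl | hl
  · have hC : Cf l = fun t => ((Real.cosh (Real.sqrt (-l) * t) : ℝ) : ℂ) := by
      funext x; unfold Cf; rw [if_neg (by linarith)]
    have hS : Sf l t = ((Real.sinh (Real.sqrt (-l) * t) / Real.sqrt (-l) : ℝ) : ℂ) := by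
      unfold Sf; rw [if_neg (by linarith), if_neg (by linarith)]
    rw [hC, hS]
    have hsq : Real.sqrt (-l) * Real.sqrt (-l) = -l := Real.mul_self_sqrt (by linarith)
    have hs : Real.sqrt (-l) ≠ 0 := by
      have h0 : 0 < -l := by linarith
      positivity
    have h1 : HasDerivAt (fun x : ℝ => Real.sqrt (-l) * x) (Real.sqrt (-l)) t := by
      simpa using (hasDerivAt_id t).const_mul (Real.sqrt (-l))
    have h2 := (Real.hasDerivAt_cosh (Real.sqrt (-l) * t)).comp t h1
    have h4 := h2.ofReal_comp
    have h5 : ((Real.sinh (Real.sqrt (-l) * t) * Real.sqrt (-l) : ℝ) : ℂ)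
        = -(l : ℂ) * ((Real.sinh (Real.sqrt (-l) * t) / Real.sqrt (-l) : ℝ) : ℂ) := by
      have : Real.sinh (Real.sqrt (-l) * t) * Real.sqrt (-l)
          = -l * (Real.sinh (Real.sqrt (-l) * t) / Real.sqrt (-l)) := by
        field_simp; rw [Real.sq_sqrt (by linarith)]; ring
      rw [this]; push_cast; ring
    rw [h5] at h4; exact h4
  · subst hl
    have hC : Cf 0 = fun _ : ℝ => (1 : ℂ) := by
      funext x; unfold Cf; simp
    rw [hC]
    have : -(0 : ℂ) * Sf 0 t = 0 := by simp
    rw [show ((0:ℝ):ℂ) = (0:ℂ) by norm_num] at *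
    simpa [this] using hasDerivAt_const t (1 : ℂ)
  · have hC : Cf l = fun t => ((Real.cos (Real.sqrt l * t) : ℝ) : ℂ) := by
      funext x; unfold Cf; rw [if_pos hl.le]
    have hS : Sf l t = ((Real.sin (Real.sqrt l * t) / Real.sqrt l : ℝ) : ℂ) := by
      unfold Sf; rw [if_pos hl]
    rw [hC, hS]
    have hsq : Real.sqrt l * Real.sqrt l = l := Real.mul_self_sqrt hl.le
    have hs : Real.sqrt l ≠ 0 := by positivity
    have h1 : HasDerivAt (fun x : ℝ => Real.sqrt l * x) (Real.sqrt l) t := by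
      simpa using (hasDerivAt_id t).const_mul (Real.sqrt l)
    have h2 := (Real.hasDerivAt_cos (Real.sqrt l * t)).comp t h1
    have h4 := h2.ofReal_comp
    have h5 : ((-Real.sin (Real.sqrt l * t) * Real.sqrt l : ℝ) : ℂ)
        = -(l : ℂ) * ((Real.sin (Real.sqrt l * t) / Real.sqrt l : ℝ) : ℂ) := by
      have : -Real.sin (Real.sqrt l * t) * Real.sqrt l
          = -l * (Real.sin (Real.sqrt l * t) / Real.sqrt l) := by
        field_simp; rw [Real.sq_sqrt hl.le]; ring
      rw [this]; push_cast; ring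
    rw [h5] at h4; exact h4

lemma contDiff_Sf (l : ℝ) : ContDiff ℝ 2 (Sf l) := by
  rcases lt_trichotomy l 0 with hl | hl | hl
  · have hS : Sf l = fun t => ((Real.sinh (Real.sqrt (-l) * t) / Real.sqrt (-l) : ℝ) : ℂ) := by
      funext x; unfold Sf; rw [if_neg (by linarith), if_neg (by linarith)]
    rw [hS]
    exact Complex.ofRealCLM.contDiff.comp
      (((Real.contDiff_sinh.comp ((contDiff_const).mul contDiff_id)).div_const _))
  · subst hl
    have hS : Sf 0 = fun t : ℝ => ((t : ℝ) : ℂ) := by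
      funext x; unfold Sf; rw [if_neg (by norm_num), if_pos rfl]
    rw [hS]
    exact Complex.ofRealCLM.contDiff.comp contDiff_id
  · have hS : Sf l = fun t => ((Real.sin (Real.sqrt l * t) / Real.sqrt l : ℝ) : ℂ) := by
      funext x; unfold Sf; rw [if_pos hl]
    rw [hS]
    exact Complex.ofRealCLM.contDiff.comp
      (((Real.contDiff_sin.comp ((contDiff_const).mul contDiff_id)).div_const _))

lemma contDiff_Cf (l : ℝ) : ContDiff ℝ 2 (Cf l) := by
  rcases le_or_gt 0 l with hl | hl
  · have hC : Cf l = fun t => ((Real.cos (Real.sqrt l * t) : ℝ) : ℂ) := by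
      funext x; unfold Cf; rw [if_pos hl]
    rw [hC]
    exact Complex.ofRealCLM.contDiff.comp
      (Real.contDiff_cos.comp ((contDiff_const).mul contDiff_id))
  · have hC : Cf l = fun t => ((Real.cosh (Real.sqrt (-l) * t) : ℝ) : ℂ) := by
      funext x; unfold Cf; rw [if_neg (by linarith)]
    rw [hC]
    exact Complex.ofRealCLM.contDiff.comp
      (Real.contDiff_cosh.comp ((contDiff_const).mul contDiff_id))

lemma contDiff_two_diff {f : ℝ → ℂ} (hf : ContDiff ℝ 2 f) :
    Differentiable ℝ f ∧ Differentiable ℝ (deriv f) := by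
  have h2 : ContDiff ℝ ((1:ℕ) + 1) f := by norm_num at hf ⊢; exact hf
  obtain ⟨h1, _, h3⟩ := contDiff_succ_iff_deriv.mp h2
  exact ⟨h1, h3.differentiable (by norm_num)⟩

/-- shifted fundamental solutions -/
lemma hasDerivAt_Sf_shift (l a x : ℝ) :
    HasDerivAt (fun x => Sf l (x - a)) (Cf l (x - a)) x := by
  have hi : HasDerivAt (fun y : ℝ => y - a) 1 x := by
    simpa using (hasDerivAt_id x).sub_const a
  simpa [Function.comp_def] using HasDerivAt.scomp x (hasDerivAt_Sf l (x - a)) hi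

lemma hasDerivAt_Cf_shift (l a x : ℝ) :
    HasDerivAt (fun x => Cf l (x - a)) (-(l : ℂ) * Sf l (x - a)) x := by
  have hi : HasDerivAt (fun y : ℝ => y - a) 1 x := by
    simpa using (hasDerivAt_id x).sub_const a
  simpa [Function.comp_def] using HasDerivAt.scomp x (hasDerivAt_Cf l (x - a)) hi

lemma hasDerivAt_Sf_rev (l c x : ℝ) :
    HasDerivAt (fun x => Sf l (c - x)) (-Cf l (c - x)) x := by
  have hi : HasDerivAt (fun y : ℝ => c - y) (-1) x := by
    simpa using (hasDerivAt_id x).const_sub c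
  simpa [Function.comp_def] using HasDerivAt.scomp x (hasDerivAt_Sf l (c - x)) hi

lemma hasDerivAt_Cf_rev (l c x : ℝ) :
    HasDerivAt (fun x => Cf l (c - x)) ((l : ℂ) * Sf l (c - x)) x := by
  have hi : HasDerivAt (fun y : ℝ => c - y) (-1) x := by
    simpa using (hasDerivAt_id x).const_sub c
  have := HasDerivAt.scomp x (hasDerivAt_Cf l (c - x)) hi
  have h2 : -(l:ℂ) * Sf l (c - x) * (-1) = (l:ℂ) * Sf l (c - x) := by ring
  simpa [h2, Function.comp_def] using this

/-- Any `C²` solution of `f'' = -l f` on `[a,b]` is a combination of `Cf` and `Sf`. -/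
lemma ode_rep {l : ℝ} {f : ℝ → ℂ} (hf : ContDiff ℝ 2 f) {a b : ℝ}
    (hode : ∀ x ∈ Set.Icc a b, deriv (deriv f) x = -(l : ℂ) * f x) :
    Set.EqOn f (fun x => f a * Cf l (x - a) + deriv f a * Sf l (x - a)) (Set.Icc a b) := by
  obtain ⟨hd1, hd2⟩ := contDiff_two_diff hf
  set A : ℂ := f a with hA
  set B : ℂ := deriv f a with hB
  set g : ℝ → ℂ := fun x => A * Cf l (x - a) + B * Sf l (x - a) with hgdef
  set g' : ℝ → ℂ := fun x => A * (-(l : ℂ) * Sf l (x - a)) + B * Cf l (x - a) with hg'def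
  have hg : ∀ x, HasDerivAt g (g' x) x := fun x =>
    ((hasDerivAt_Cf_shift l a x).const_mul A).add ((hasDerivAt_Sf_shift l a x).const_mul B)
  have hg' : ∀ x, HasDerivAt g' (-(l : ℂ) * g x) x := by
    intro x
    have := (((hasDerivAt_Sf_shift l a x).const_mul (-(l:ℂ))).const_mul A).add
      ((hasDerivAt_Cf_shift l a x).const_mul B)
    refine this.congr_deriv ?_
    simp only [hgdef]; ring
  -- the vector field
  set L : (ℂ × ℂ) →L[ℝ] (ℂ × ℂ) :=
    (ContinuousLinearMap.snd ℝ ℂ ℂ).prod ((-l : ℝ) • ContinuousLinearMap.fst ℝ ℂ ℂ) with hL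
  have hLapp : ∀ p : ℂ × ℂ, L p = (p.2, -(l:ℂ) * p.1) := by
    intro p
    have hh : ((-l : ℝ) • p.1) = -(l:ℂ) * p.1 := by
      rw [Complex.real_smul]; push_cast; ring
    simp [hL, ContinuousLinearMap.prod_apply, hh]
  set F : ℝ → ℂ × ℂ := fun x => (f x, deriv f x) with hF
  set G : ℝ → ℂ × ℂ := fun x => (g x, g' x) with hG
  have key : Set.EqOn F G (Set.Icc a b) := by
    apply ODE_solution_unique (v := fun _ p => L p) (K := ‖L‖₊)
    · intro _; exact L.lipschitz
    · exact ((hd1.continuous).prodMk (hd2.continuous)).continuousOn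
    · intro t ht
      have h1 : HasDerivAt F (deriv f t, deriv (deriv f) t) t :=
        ((hd1 t).hasDerivAt).prodMk ((hd2 t).hasDerivAt)
      have h2 : L (F t) = (deriv f t, deriv (deriv f) t) := by
        rw [hLapp]
        exact Prod.ext rfl (by simp [hF, (hode t (Set.Ico_subset_Icc_self ht)).symm])
      rw [h2]; exact h1.hasDerivWithinAt
    · refine Continuous.continuousOn (Continuous.prodMk ?_ ?_)
      · exact continuous_iff_continuousAt.mpr (fun x => (hg x).continuousAt)
      · exact continuous_iff_continuousAt.mpr (fun x => (hg' x).continuousAt)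
    · intro t ht
      have h1 : HasDerivAt G (g' t, -(l : ℂ) * g t) t := (hg t).prodMk (hg' t)
      have h2 : L (G t) = (g' t, -(l:ℂ) * g t) := by rw [hLapp]
      rw [h2]; exact h1.hasDerivWithinAt
    · have hga : g a = A := by simp [hgdef, Cf_zero, Sf_zero]
      have hg'a : g' a = B := by simp [hg'def, Cf_zero, Sf_zero]
      simp [hF, hG, hga, hg'a]; exact ⟨rfl, rfl⟩
  intro x hx
  have := key hx
  exact congrArg Prod.fst this

lemma Sf_neg {l : ℝ} (hl : l < 0) (t : ℝ) :
    Sf l t = ((Real.sinh (Real.sqrt (-l) * t) / Real.sqrt (-l) : ℝ) : ℂ) := by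
  unfold Sf; rw [if_neg (by linarith), if_neg (by linarith)]

lemma Sf_zero' (t : ℝ) : Sf 0 t = ((t : ℝ) : ℂ) := by
  unfold Sf; rw [if_neg (by norm_num), if_pos rfl]

lemma Sf_pos' {l : ℝ} (hl : 0 < l) (t : ℝ) :
    Sf l t = ((Real.sin (Real.sqrt l * t) / Real.sqrt l : ℝ) : ℂ) := by
  unfold Sf; rw [if_pos hl]

lemma Cf_neg {l : ℝ} (hl : l < 0) (t : ℝ) :
    Cf l t = ((Real.cosh (Real.sqrt (-l) * t) : ℝ) : ℂ) := by
  unfold Cf; rw [if_neg (by linarith)]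

lemma Cf_nonneg {l : ℝ} (hl : 0 ≤ l) (t : ℝ) :
    Cf l t = ((Real.cos (Real.sqrt l * t) : ℝ) : ℂ) := by
  unfold Cf; rw [if_pos hl]

lemma sqrt_half_lt_pi {l d : ℝ} (hd : 0 < d) (hs : 0 < l) (hl : l < (2 * π / d) ^ 2) :
    Real.sqrt l * (d / 2) < π := by
  have h2 : Real.sqrt l < 2 * π / d := by
    have h3 := Real.sqrt_lt_sqrt hs.le hl
    rwa [Real.sqrt_sq (by positivity)] at h3
  calc Real.sqrt l * (d / 2) < (2 * π / d) * (d / 2) := by gcongr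
    _ = π := by field_simp

lemma Sf_half_ne_zero {l d : ℝ} (hd : 0 < d) (hl : l < (2 * π / d) ^ 2) :
    Sf l (d / 2) ≠ 0 := by
  rcases lt_trichotomy l 0 with hs | hs | hs
  · rw [Sf_neg hs]
    have h1 : 0 < Real.sqrt (-l) := Real.sqrt_pos.mpr (by linarith)
    have h2 : 0 < Real.sinh (Real.sqrt (-l) * (d / 2)) := Real.sinh_pos_iff.mpr (by positivity)
    simp only [ne_eq, Complex.ofReal_eq_zero]
    positivity
  · subst hs
    rw [Sf_zero']
    simp only [ne_eq, Complex.ofReal_eq_zero]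
    positivity
  · rw [Sf_pos' hs]
    have h1 : 0 < Real.sqrt l := Real.sqrt_pos.mpr hs
    have h2 : 0 < Real.sin (Real.sqrt l * (d / 2)) :=
      Real.sin_pos_of_pos_of_lt_pi (by positivity) (sqrt_half_lt_pi hd hs hl)
    simp only [ne_eq, Complex.ofReal_eq_zero]
    positivity

lemma FD_mul_Sf {l d : ℝ} (hd : 0 < d) (hl : l < (2 * π / d) ^ 2) :
    (FD d l : ℂ) * Sf l (d / 2) = -2 * Cf l (d / 2) := by
  have hd' : d ≠ 0 := hd.ne'
  rcases lt_trichotomy l 0 with hs | hs | hs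
  · rw [Sf_neg hs, Cf_neg hs]
    have h1 : 0 < Real.sqrt (-l) := Real.sqrt_pos.mpr (by linarith)
    have h2 : 0 < Real.sinh (Real.sqrt (-l) * (d / 2)) := Real.sinh_pos_iff.mpr (by positivity)
    have hFD : FD d l = -2 * Real.sqrt (-l) *
        (Real.cosh (Real.sqrt (-l) * (d / 2)) / Real.sinh (Real.sqrt (-l) * (d / 2))) := by
      unfold FD
      rw [if_neg (by linarith), if_neg (by linarith),
        show d * Real.sqrt (-l) / 2 = Real.sqrt (-l) * (d / 2) by ring]
    have key : (-2 * Real.sqrt (-l) *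
        (Real.cosh (Real.sqrt (-l) * (d / 2)) / Real.sinh (Real.sqrt (-l) * (d / 2)))) *
        (Real.sinh (Real.sqrt (-l) * (d / 2)) / Real.sqrt (-l))
        = -2 * Real.cosh (Real.sqrt (-l) * (d / 2)) := by
      field_simp
    rw [hFD, ← Complex.ofReal_mul, key]
    push_cast
    ring
  · subst hs
    rw [Sf_zero', Cf_nonneg le_rfl]
    have hFD : FD d 0 = -4 / d := by
      unfold FD; rw [if_neg (by norm_num), if_pos rfl]
    have key : (-4 / d) * (d / 2) = -2 * Real.cos (Real.sqrt 0 * (d / 2)) := by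
      rw [Real.sqrt_zero, zero_mul, Real.cos_zero]
      field_simp
      ring
    rw [hFD, ← Complex.ofReal_mul, key]
    push_cast
    ring
  · rw [Sf_pos' hs, Cf_nonneg hs.le]
    have h1 : 0 < Real.sqrt l := Real.sqrt_pos.mpr hs
    have h2 : 0 < Real.sin (Real.sqrt l * (d / 2)) :=
      Real.sin_pos_of_pos_of_lt_pi (by positivity) (sqrt_half_lt_pi hd hs hl)
    have hFD : FD d l = -2 * Real.sqrt l *
        (Real.cos (Real.sqrt l * (d / 2)) / Real.sin (Real.sqrt l * (d / 2))) := by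
      unfold FD
      rw [if_pos hs, show d * Real.sqrt l / 2 = Real.sqrt l * (d / 2) by ring]
    have gen : ∀ r c s' : ℝ, r ≠ 0 → s' ≠ 0 → (-2 * r * (c / s')) * (s' / r) = -2 * c := by
      intro r c s' hr hs'
      field_simp
    have key := gen (Real.sqrt l) (Real.cos (Real.sqrt l * (d / 2)))
      (Real.sin (Real.sqrt l * (d / 2))) h1.ne' h2.ne'
    rw [hFD, ← Complex.ofReal_mul, key]
    push_cast
    ring

lemma Sf_sub (l t s : ℝ) : Sf l t * Cf l s - Cf l t * Sf l s = Sf l (t - s) := by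
  rcases lt_trichotomy l 0 with hs' | hs' | hs'
  · rw [Sf_neg hs', Sf_neg hs', Sf_neg hs', Cf_neg hs', Cf_neg hs']
    have h1 : Real.sqrt (-l) ≠ 0 := (Real.sqrt_pos.mpr (by linarith)).ne'
    have key : Real.sinh (Real.sqrt (-l) * t) / Real.sqrt (-l) * Real.cosh (Real.sqrt (-l) * s)
        - Real.cosh (Real.sqrt (-l) * t) * (Real.sinh (Real.sqrt (-l) * s) / Real.sqrt (-l))
        = Real.sinh (Real.sqrt (-l) * (t - s)) / Real.sqrt (-l) := by
      rw [show Real.sqrt (-l) * (t - s) = Real.sqrt (-l) * t - Real.sqrt (-l) * s by ring,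
        Real.sinh_sub]
      field_simp
    rw [← Complex.ofReal_mul, ← Complex.ofReal_mul, ← Complex.ofReal_sub, key]
  · subst hs'
    rw [Sf_zero', Sf_zero', Sf_zero', Cf_nonneg le_rfl, Cf_nonneg le_rfl]
    simp [Real.sqrt_zero]
  · rw [Sf_pos' hs', Sf_pos' hs', Sf_pos' hs', Cf_nonneg hs'.le, Cf_nonneg hs'.le]
    have h1 : Real.sqrt l ≠ 0 := (Real.sqrt_pos.mpr hs').ne'
    have key : Real.sin (Real.sqrt l * t) / Real.sqrt l * Real.cos (Real.sqrt l * s)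
        - Real.cos (Real.sqrt l * t) * (Real.sin (Real.sqrt l * s) / Real.sqrt l)
        = Real.sin (Real.sqrt l * (t - s)) / Real.sqrt l := by
      rw [show Real.sqrt l * (t - s) = Real.sqrt l * t - Real.sqrt l * s by ring, Real.sin_sub]
      field_simp
    rw [← Complex.ofReal_mul, ← Complex.ofReal_mul, ← Complex.ofReal_sub, key]

lemma tcot_lt_one {θ : ℝ} (h0 : 0 < θ) (hπ : θ < π) :
    θ * (Real.cos θ / Real.sin θ) < 1 := by
  have hs : 0 < Real.sin θ := Real.sin_pos_of_pos_of_lt_pi h0 hπ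
  rw [mul_div_assoc'] at *
  rw [div_lt_one hs]
  rcases le_or_gt (Real.cos θ) 0 with hc | hc
  · have : θ * Real.cos θ ≤ 0 := mul_nonpos_of_nonneg_of_nonpos h0.le hc
    linarith
  · have hθ2 : θ < π / 2 := by
      by_contra hcon
      push_neg at hcon
      have := Real.cos_nonpos_of_pi_div_two_le_of_le hcon (by linarith [Real.pi_pos])
      linarith
    have := Real.lt_tan h0 hθ2
    rw [Real.tan_eq_sin_div_cos] at this
    calc θ * Real.cos θ < (Real.sin θ / Real.cos θ) * Real.cos θ := by
          exact mul_lt_mul_of_pos_right this hc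
      _ = Real.sin θ := by field_simp

lemma one_lt_tcoth {θ : ℝ} (h0 : 0 < θ) :
    1 < θ * (Real.cosh θ / Real.sinh θ) := by
  have hs : 0 < Real.sinh θ := by rwa [Real.sinh_pos_iff]
  rw [mul_div_assoc']
  rw [lt_div_iff₀ hs, one_mul]
  -- show sinh θ < θ * cosh θ
  set F : ℝ → ℝ := fun x => x * Real.cosh x - Real.sinh x with hF
  have hder : ∀ x : ℝ, HasDerivAt F (x * Real.sinh x) x := by
    intro x
    have h1 : HasDerivAt (fun x : ℝ => x * Real.cosh x)
        (1 * Real.cosh x + x * Real.sinh x) x :=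
      (hasDerivAt_id x).mul (Real.hasDerivAt_cosh x)
    have := h1.sub (Real.hasDerivAt_sinh x)
    refine this.congr_deriv ?_
    ring
  have hmono : StrictMonoOn F (Set.Ici 0) := by
    apply strictMonoOn_of_deriv_pos (convex_Ici 0)
    · exact (continuous_id.mul Real.continuous_cosh).sub Real.continuous_sinh |>.continuousOn
    · intro x hx
      rw [interior_Ici] at hx
      rw [(hder x).deriv]
      have : 0 < Real.sinh x := by rwa [Real.sinh_pos_iff]
      exact mul_pos hx this
  have := hmono (Set.self_mem_Ici) (Set.mem_Ici.mpr h0.le) h0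
  simp only [hF] at this
  simp at this
  linarith

lemma tcot_strictAnti : StrictAntiOn (fun θ => θ * (Real.cos θ / Real.sin θ)) (Set.Ioo 0 π) := by
  have hderiv : ∀ θ ∈ Set.Ioo 0 π,
      HasDerivAt (fun θ => θ * (Real.cos θ / Real.sin θ))
        ((Real.sin θ * Real.cos θ - θ) / (Real.sin θ)^2) θ := by
    intro θ hθ
    have hs : Real.sin θ ≠ 0 := (Real.sin_pos_of_pos_of_lt_pi hθ.1 hθ.2).ne'
    have h1 : HasDerivAt (fun θ : ℝ => θ * Real.cos θ)
        (1 * Real.cos θ + θ * -Real.sin θ) θ := (hasDerivAt_id θ).mul (Real.hasDerivAt_cos θ)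
    have h2 := h1.div (Real.hasDerivAt_sin θ) hs
    have heq : ∀ x : ℝ, x * (Real.cos x / Real.sin x) = x * Real.cos x / Real.sin x := by
      intro x; ring
    simp only [heq]
    refine h2.congr_deriv ?_
    have hsq : Real.sin θ ^ 2 + Real.cos θ ^ 2 = 1 := Real.sin_sq_add_cos_sq θ
    rw [div_left_inj' (pow_ne_zero 2 hs)]
    linear_combination (-θ) * hsq
  apply strictAntiOn_of_deriv_neg (convex_Ioo 0 π)
  · intro θ hθ
    exact (hderiv θ hθ).continuousAt.continuousWithinAt
  · intro θ hθ
    rw [interior_Ioo] at hθ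
    rw [(hderiv θ hθ).deriv]
    apply div_neg_of_neg_of_pos
    · have h1 : Real.sin (2 * θ) < 2 * θ := Real.sin_lt (by linarith [hθ.1])
      rw [Real.sin_two_mul] at h1
      linarith
    · have : Real.sin θ ≠ 0 := (Real.sin_pos_of_pos_of_lt_pi hθ.1 hθ.2).ne'
      positivity

lemma tcoth_strictMono : StrictMonoOn (fun θ => θ * (Real.cosh θ / Real.sinh θ)) (Set.Ioi 0) := by
  have hderiv : ∀ θ ∈ Set.Ioi (0:ℝ),
      HasDerivAt (fun θ => θ * (Real.cosh θ / Real.sinh θ))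
        ((Real.sinh θ * Real.cosh θ - θ) / (Real.sinh θ)^2) θ := by
    intro θ hθ
    have hs : Real.sinh θ ≠ 0 := by
      have : 0 < Real.sinh θ := by rwa [Real.sinh_pos_iff]
      exact this.ne'
    have h1 : HasDerivAt (fun θ : ℝ => θ * Real.cosh θ)
        (1 * Real.cosh θ + θ * Real.sinh θ) θ := (hasDerivAt_id θ).mul (Real.hasDerivAt_cosh θ)
    have h2 := h1.div (Real.hasDerivAt_sinh θ) hs
    have heq : ∀ x : ℝ, x * (Real.cosh x / Real.sinh x) = x * Real.cosh x / Real.sinh x := by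
      intro x; ring
    simp only [heq]
    refine h2.congr_deriv ?_
    have hsq : Real.cosh θ ^ 2 - Real.sinh θ ^ 2 = 1 := Real.cosh_sq_sub_sinh_sq θ
    rw [div_left_inj' (pow_ne_zero 2 hs)]
    linear_combination (-θ) * hsq
  apply strictMonoOn_of_deriv_pos (convex_Ioi 0)
  · intro θ hθ
    exact (hderiv θ hθ).continuousAt.continuousWithinAt
  · intro θ hθ
    rw [interior_Ioi] at hθ
    rw [(hderiv θ hθ).deriv]
    apply div_pos
    · have h1 : 2 * θ < Real.sinh (2 * θ) := Real.self_lt_sinh_iff.mpr (by linarith [mem_Ioi.mp hθ])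
      have h2 : Real.sinh (2 * θ) = 2 * Real.sinh θ * Real.cosh θ := by
        rw [two_mul, Real.sinh_add]; ring
      rw [h2] at h1
      linarith
    · have : Real.sinh θ ≠ 0 := by
        have : 0 < Real.sinh θ := Real.sinh_pos_iff.mpr (mem_Ioi.mp hθ)
        exact this.ne'
      positivity

noncomputable def br (d l : ℝ) : ℝ :=
  if 0 < l then (d * Real.sqrt l / 2) * (Real.cos (d * Real.sqrt l / 2) / Real.sin (d * Real.sqrt l / 2))
  else if l = 0 then 1
  else (d * Real.sqrt (-l) / 2) * (Real.cosh (d * Real.sqrt (-l) / 2) / Real.sinh (d * Real.sqrt (-l) / 2))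

lemma brkey {d s Q : ℝ} (hd : d ≠ 0) : -(4 / d) * (d * s / 2 * Q) = -2 * s * Q := by
  field_simp
  ring

lemma FD_eq_br {d : ℝ} (hd : 0 < d) (l : ℝ) : FD d l = -(4 / d) * br d l := by
  have hd' : d ≠ 0 := hd.ne'
  unfold FD br
  rcases lt_trichotomy l 0 with hl | hl | hl
  · rw [if_neg (by linarith), if_neg (by linarith), if_neg (by linarith), if_neg (by linarith)]
    exact (brkey hd').symm
  · subst hl
    rw [if_neg (by norm_num), if_pos rfl, if_neg (by norm_num), if_pos rfl]
    field_simp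
  · rw [if_pos hl, if_pos hl]
    exact (brkey hd').symm

lemma theta_mem {d l : ℝ} (hd : 0 < d) (hl0 : 0 < l) (hl : l < (2 * π / d) ^ 2) :
    d * Real.sqrt l / 2 ∈ Set.Ioo 0 π := by
  constructor
  · have : 0 < Real.sqrt l := Real.sqrt_pos.mpr hl0
    positivity
  · have h1 : Real.sqrt l < 2 * π / d := by
      have h2 : Real.sqrt l < Real.sqrt ((2 * π / d) ^ 2) := Real.sqrt_lt_sqrt hl0.le hl
      rwa [Real.sqrt_sq (by positivity)] at h2
    calc d * Real.sqrt l / 2 < d * (2 * π / d) / 2 := by gcongr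
      _ = π := by field_simp

lemma br_strictAnti {d : ℝ} (hd : 0 < d) :
    StrictAntiOn (br d) (Set.Iio ((2 * π / d) ^ 2)) := by
  intro l₁ h₁ l₂ h₂ hlt
  simp only [Set.mem_Iio] at h₁ h₂
  rcases lt_trichotomy l₁ 0 with hs1 | hs1 | hs1
  · have hθ₁ : 0 < d * Real.sqrt (-l₁) / 2 := by
      have : 0 < Real.sqrt (-l₁) := Real.sqrt_pos.mpr (by linarith)
      positivity
    have hb₁ : 1 < br d l₁ := by
      unfold br
      rw [if_neg (by linarith), if_neg (by linarith)]
      exact one_lt_tcoth hθ₁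
    rcases lt_trichotomy l₂ 0 with hs2 | hs2 | hs2
    · have hθ₂ : 0 < d * Real.sqrt (-l₂) / 2 := by
        have : 0 < Real.sqrt (-l₂) := Real.sqrt_pos.mpr (by linarith)
        positivity
      have hth : d * Real.sqrt (-l₂) / 2 < d * Real.sqrt (-l₁) / 2 := by
        have : Real.sqrt (-l₂) < Real.sqrt (-l₁) := Real.sqrt_lt_sqrt (by linarith) (by linarith)
        gcongr
      unfold br
      rw [if_neg (by linarith), if_neg (by linarith), if_neg (by linarith), if_neg (by linarith)]
      exact tcoth_strictMono (Set.mem_Ioi.mpr hθ₂) (Set.mem_Ioi.mpr hθ₁) hth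
    · subst hs2
      have : br d 0 = 1 := by unfold br; rw [if_neg (by norm_num), if_pos rfl]
      rw [this]; exact hb₁
    · have hb₂ : br d l₂ < 1 := by
        unfold br
        rw [if_pos hs2]
        have := theta_mem hd hs2 h₂
        exact tcot_lt_one this.1 this.2
      linarith
  · subst hs1
    have hb₁ : br d 0 = 1 := by unfold br; rw [if_neg (by norm_num), if_pos rfl]
    have hs2 : 0 < l₂ := hlt
    have hb₂ : br d l₂ < 1 := by
      unfold br
      rw [if_pos hs2]
      have := theta_mem hd hs2 h₂
      exact tcot_lt_one this.1 this.2
    linarith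
  · have hs2 : 0 < l₂ := lt_trans hs1 hlt
    have hm₁ := theta_mem hd hs1 h₁
    have hm₂ := theta_mem hd hs2 h₂
    have hth : d * Real.sqrt l₁ / 2 < d * Real.sqrt l₂ / 2 := by
      have : Real.sqrt l₁ < Real.sqrt l₂ := Real.sqrt_lt_sqrt hs1.le hlt
      gcongr
    unfold br
    rw [if_pos hs1, if_pos hs2]
    exact tcot_strictAnti hm₁ hm₂ hth

lemma FD_strictMonoOn {d : ℝ} (hd : 0 < d) :
    StrictMonoOn (FD d) (Set.Iio ((2 * π / d) ^ 2)) := by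
  intro l₁ h₁ l₂ h₂ hlt
  rw [FD_eq_br hd, FD_eq_br hd]
  have := br_strictAnti hd h₁ h₂ hlt
  have hc : 0 < 4 / d := by positivity
  nlinarith [this, hc]


lemma deriv_eq_on_left {f g : ℝ → ℂ} {a b : ℝ} (hab : a < b)
    (hf : DifferentiableAt ℝ f b) (hg : DifferentiableAt ℝ g b)
    (heq : Set.EqOn f g (Set.Icc a b)) : deriv f b = deriv g b := by
  have hb : b ∈ Set.Icc a b := ⟨hab.le, le_rfl⟩
  have h1 : HasDerivWithinAt f (deriv f b) (Set.Icc a b) b := hf.hasDerivAt.hasDerivWithinAt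
  have h2 : HasDerivWithinAt f (deriv g b) (Set.Icc a b) b :=
    (hg.hasDerivAt.hasDerivWithinAt).congr (fun x hx => heq hx) (heq hb)
  exact UniqueDiffWithinAt.eq_deriv _ ((uniqueDiffOn_Icc hab) b hb) h1 h2

lemma eigen_char {xm xp α' l : ℝ} (h : xm < xp) (hl : l < (2 * Real.pi / (xp - xm)) ^ 2)
    {u : ℝ → ℂ} (hu : IsDeltaDirichletEF xm xp α' l u) :
    FD (xp - xm) l = α' ∧ ∃ A : ℂ, A ≠ 0 ∧
      (∀ x ∈ Set.Icc xm ((xm + xp) / 2), u x = A * Sf l (x - xm)) ∧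
      (∀ x ∈ Set.Icc ((xm + xp) / 2) xp, u x = A * Sf l (xp - x)) := by
  obtain ⟨hc, ⟨x₀, hx₀, hx₀ne⟩, hum, hup, v, w, hv2, hw2, huv, huw, hvode, hwode, hjump⟩ := hu
  have hd : 0 < xp - xm := sub_pos.mpr h
  set y : ℝ := (xm + xp) / 2 with hydef
  set d : ℝ := xp - xm with hddef
  have hy1 : xm < y := by rw [hydef]; linarith
  have hy2 : y < xp := by rw [hydef]; linarith
  have hymxm : y - xm = d / 2 := by rw [hydef, hddef]; ring
  have hxpy : xp - y = d / 2 := by rw [hydef, hddef]; ring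
  have hvode' : ∀ x ∈ Set.Icc xm y, deriv (deriv v) x = -(l : ℂ) * v x := by
    intro x hx
    have := hvode x hx
    linear_combination -this
  have hwode' : ∀ x ∈ Set.Icc y xp, deriv (deriv w) x = -(l : ℂ) * w x := by
    intro x hx
    have := hwode x hx
    linear_combination -this
  have hrepv := ode_rep hv2 hvode'
  have hrepw := ode_rep hw2 hwode'
  have hvxm : v xm = 0 := by rw [← huv ⟨le_rfl, hy1.le⟩]; exact hum
  set A : ℂ := deriv v xm with hAdef
  set P : ℂ := w y with hPdef
  set Q : ℂ := deriv w y with hQdef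
  have hvrep : ∀ x ∈ Set.Icc xm y, v x = A * Sf l (x - xm) := by
    intro x hx
    have := hrepv hx
    rw [hvxm] at this
    simpa using this
  have hwrep : ∀ x ∈ Set.Icc y xp, w x = P * Cf l (x - y) + Q * Sf l (x - y) := by
    intro x hx
    exact hrepw hx
  set S : ℂ := Sf l (d / 2) with hSdef
  set C : ℂ := Cf l (d / 2) with hCdef
  have huy_v : u y = A * S := by
    rw [huv ⟨hy1.le, le_rfl⟩, hvrep y ⟨hy1.le, le_rfl⟩, hymxm]
  have huy_w : u y = P := huw ⟨le_rfl, hy2.le⟩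
  have hend : P * C + Q * S = 0 := by
    have h1 := hwrep xp ⟨hy2.le, le_rfl⟩
    rw [hxpy] at h1
    have h2 : w xp = 0 := by rw [← huw ⟨hy2.le, le_rfl⟩]; exact hup
    rw [← h1]
    exact h2
  have hdvy : deriv v y = A * C := by
    have hgd : HasDerivAt (fun x => A * Sf l (x - xm)) (A * Cf l (y - xm)) y :=
      (hasDerivAt_Sf_shift l xm y).const_mul A
    have heq := deriv_eq_on_left hy1 ((contDiff_two_diff hv2).1 y) hgd.differentiableAt
      (fun x hx => hvrep x hx)
    rw [heq, hgd.deriv, hymxm]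
  have hjump' : Q - A * C = (α' : ℂ) * (A * S) := by
    rw [hdvy, huy_v] at hjump
    exact hjump
  have hPA : P = A * S := by rw [← huy_w, huy_v]
  have hQform : Q = A * C + (α' : ℂ) * (A * S) := by linear_combination hjump'
  have hkey : A * S * (2 * C + (α' : ℂ) * S) = 0 := by
    rw [hQform, hPA] at hend
    linear_combination hend
  have hA : A ≠ 0 := by
    intro hA0
    have hQ0 : Q = 0 := by rw [hQform, hA0]; ring
    have hP0 : P = 0 := by rw [hPA, hA0]; ring
    have hu0 : ∀ x ∈ Set.Icc xm xp, u x = 0 := by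
      intro x hx
      rcases le_total x y with hxy | hxy
      · rw [huv ⟨hx.1, hxy⟩, hvrep x ⟨hx.1, hxy⟩, hA0]; ring
      · rw [huw ⟨hxy, hx.2⟩, hwrep x ⟨hxy, hx.2⟩, hP0, hQ0]; ring
    exact hx₀ne (hu0 x₀ hx₀)
  have hS : S ≠ 0 := Sf_half_ne_zero hd hl
  have hfac : 2 * C + (α' : ℂ) * S = 0 := by
    rcases mul_eq_zero.mp hkey with h' | h'
    · rcases mul_eq_zero.mp h' with h'' | h''
      · exact absurd h'' hA
      · exact absurd h'' hS
    · exact h'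
  have hFDc : (FD d l : ℂ) * S = -2 * C := FD_mul_Sf hd hl
  have hcast : ((FD d l : ℝ) : ℂ) = (α' : ℂ) := by
    have h2 : ((FD d l : ℂ) - (α' : ℂ)) * S = 0 := by linear_combination hFDc - hfac
    rcases mul_eq_zero.mp h2 with h' | h'
    · linear_combination h'
    · exact absurd h' hS
  have hFD : FD d l = α' := by exact_mod_cast hcast
  refine ⟨hFD, A, hA, fun x hx => ?_, fun x hx => ?_⟩
  · rw [huv hx, hvrep x hx]
  · rw [huw hx, hwrep x hx, hPA, hQform]
    have hsub := Sf_sub l (d / 2) (x - y)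
    have harg : d / 2 - (x - y) = xp - x := by rw [hydef, hddef]; ring
    rw [harg] at hsub
    linear_combination A * hsub + (A * Sf l (x - y)) * hfac

lemma eigen_exists {xm xp l : ℝ} (h : xm < xp) (hl : l < (2 * Real.pi / (xp - xm)) ^ 2) :
    IsDeltaDirichletEF xm xp (FD (xp - xm) l) l
      (fun x => if x ≤ (xm + xp) / 2 then Sf l (x - xm) else Sf l (xp - x)) := by
  have hd : 0 < xp - xm := sub_pos.mpr h
  set y : ℝ := (xm + xp) / 2 with hydef
  set d : ℝ := xp - xm with hddef
  have hy1 : xm < y := by rw [hydef]; linarith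
  have hy2 : y < xp := by rw [hydef]; linarith
  have hymxm : y - xm = d / 2 := by rw [hydef, hddef]; ring
  have hxpy : xp - y = d / 2 := by rw [hydef, hddef]; ring
  have hcv : Continuous (fun x : ℝ => Sf l (x - xm)) :=
    (contDiff_Sf l).continuous.comp (continuous_id.sub continuous_const)
  have hcw : Continuous (fun x : ℝ => Sf l (xp - x)) :=
    (contDiff_Sf l).continuous.comp (continuous_const.sub continuous_id)
  have hagree : ∀ x : ℝ, x = y → Sf l (x - xm) = Sf l (xp - x) := by
    intro x hx
    subst hx
    rw [hymxm, hxpy]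
  have hdv : deriv (fun x : ℝ => Sf l (x - xm)) = fun x => Cf l (x - xm) :=
    funext fun x => (hasDerivAt_Sf_shift l xm x).deriv
  have hdw : deriv (fun x : ℝ => Sf l (xp - x)) = fun x => -Cf l (xp - x) :=
    funext fun x => (hasDerivAt_Sf_rev l xp x).deriv
  refine ⟨?_, ?_, ?_, ?_, (fun x => Sf l (x - xm)), (fun x => Sf l (xp - x)),
    ?_, ?_, ?_, ?_, ?_, ?_, ?_⟩
  · exact (Continuous.if_le hcv hcw continuous_id continuous_const hagree).continuousOn
  · refine ⟨y, ⟨hy1.le, hy2.le⟩, ?_⟩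
    simp only [le_refl, if_pos, hymxm]
    exact Sf_half_ne_zero hd hl
  · simp only [if_pos hy1.le, sub_self, Sf_zero]
  · beta_reduce
    rw [if_neg (not_le.mpr hy2), sub_self, Sf_zero]
  · exact (contDiff_Sf l).comp (contDiff_id.sub contDiff_const)
  · exact (contDiff_Sf l).comp (contDiff_const.sub contDiff_id)
  · intro x hx
    exact if_pos hx.2
  · intro x hx
    show (if x ≤ y then Sf l (x - xm) else Sf l (xp - x)) = Sf l (xp - x)
    rcases lt_or_ge y x with hxy | hxy
    · rw [if_neg (not_le.mpr hxy)]
    · have hxeq : x = y := le_antisymm hxy hx.1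
      rw [if_pos hxeq.le, hagree x hxeq]
  · intro x hx
    rw [hdv, (hasDerivAt_Cf_shift l xm x).deriv]
    ring
  · intro x hx
    rw [hdw]
    have hder : HasDerivAt (fun x : ℝ => -Cf l (xp - x)) (-((l : ℂ) * Sf l (xp - x))) x :=
      (hasDerivAt_Cf_rev l xp x).neg
    rw [hder.deriv]
    ring
  · rw [hdv, hdw, ← hydef]
    simp only [if_pos (le_refl y), hymxm, hxpy]
    rw [FD_mul_Sf hd hl]
    ring

lemma eigen_exists_top {xm xp : ℝ} (h : xm < xp) (α' : ℝ) :
    IsDeltaDirichletEF xm xp α' ((2 * Real.pi / (xp - xm)) ^ 2)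
      (fun x => Sf ((2 * Real.pi / (xp - xm)) ^ 2) (x - xm)) := by
  have hd : 0 < xp - xm := sub_pos.mpr h
  set l0 : ℝ := (2 * Real.pi / (xp - xm)) ^ 2 with hl0def
  have hl0 : 0 < l0 := by
    rw [hl0def]
    have hπ : 0 < Real.pi := Real.pi_pos
    positivity
  have hsq : Real.sqrt l0 = 2 * Real.pi / (xp - xm) := by
    rw [hl0def, Real.sqrt_sq (by positivity)]
  have hval : ∀ t : ℝ, Sf l0 t = ((Real.sin (Real.sqrt l0 * t) / Real.sqrt l0 : ℝ) : ℂ) :=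
    fun t => Sf_pos' hl0 t
  have hy0 : Sf l0 ((xm + xp) / 2 - xm) = 0 := by
    rw [hval, hsq]
    have : 2 * Real.pi / (xp - xm) * ((xm + xp) / 2 - xm) = Real.pi := by
      field_simp
      ring
    rw [this, Real.sin_pi]
    simp
  have hdv : deriv (fun x : ℝ => Sf l0 (x - xm)) = fun x => Cf l0 (x - xm) :=
    funext fun x => (hasDerivAt_Sf_shift l0 xm x).deriv
  refine ⟨?_, ?_, ?_, ?_, (fun x => Sf l0 (x - xm)), (fun x => Sf l0 (x - xm)),
    ?_, ?_, ?_, ?_, ?_, ?_, ?_⟩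
  · exact ((contDiff_Sf l0).continuous.comp (continuous_id.sub continuous_const)).continuousOn
  · refine ⟨xm + (xp - xm) / 4, ⟨by linarith, by linarith⟩, ?_⟩
    have harg : xm + (xp - xm) / 4 - xm = (xp - xm) / 4 := by ring
    beta_reduce
    rw [harg, hval, hsq]
    have : 2 * Real.pi / (xp - xm) * ((xp - xm) / 4) = Real.pi / 2 := by
      field_simp
      ring
    rw [this, Real.sin_pi_div_two]
    simp only [ne_eq, Complex.ofReal_eq_zero]
    have hpos : (0:ℝ) < 1 / (2 * Real.pi / (xp - xm)) := by positivity
    exact ne_of_gt hpos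
  · beta_reduce
    rw [sub_self, Sf_zero]
  · beta_reduce
    rw [hval, hsq]
    have : 2 * Real.pi / (xp - xm) * (xp - xm) = 2 * Real.pi := by field_simp
    rw [this, Real.sin_two_pi]
    simp
  · exact (contDiff_Sf l0).comp (contDiff_id.sub contDiff_const)
  · exact (contDiff_Sf l0).comp (contDiff_id.sub contDiff_const)
  · intro x _; rfl
  · intro x _; rfl
  · intro x _
    rw [hdv, (hasDerivAt_Cf_shift l0 xm x).deriv]
    ring
  · intro x _
    rw [hdv, (hasDerivAt_Cf_shift l0 xm x).deriv]
    ring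
  · beta_reduce
    rw [hy0]
    ring

end DeltaAux

open Real Set in
/-- Let `Λ = Λ^D_{α,d}` be the (unique) solution of `F_d^D(Λ) = α` in `(-∞, (2π/d)²)`,
`d = x₊ - x₋`. Then the set of `λ < (2π/d)²` admitting a δ-Dirichlet eigenfunction for
`(α, λ)` is exactly `{Λ}`; the space of δ-Dirichlet eigenfunctions for `(α, Λ)` (together
with `0`) is one-dimensional; and for `λ = (2π/d)²` a δ-Dirichlet eigenfunction exists for
every `α ∈ ℝ`. -/
theorem stmt6 (xm xp : ℝ) (h : xm < xp) (α Λ : ℝ)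
    (hΛ₁ : Λ < (2 * Real.pi / (xp - xm)) ^ 2) (hΛ₂ : FD (xp - xm) Λ = α) :
    {lam : ℝ | lam < (2 * Real.pi / (xp - xm)) ^ 2 ∧
        ∃ u : ℝ → ℂ, IsDeltaDirichletEF xm xp α lam u} = {Λ} ∧
    (∃ u₀ : ℝ → ℂ, IsDeltaDirichletEF xm xp α Λ u₀ ∧
        ∀ u : ℝ → ℂ, IsDeltaDirichletEF xm xp α Λ u →
          ∃ c : ℂ, Set.EqOn u (fun x => c * u₀ x) (Set.Icc xm xp)) ∧
    (∀ α' : ℝ, ∃ u : ℝ → ℂ,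
        IsDeltaDirichletEF xm xp α' ((2 * Real.pi / (xp - xm)) ^ 2) u) := by
  have hd : 0 < xp - xm := sub_pos.mpr h
  refine ⟨?_, ?_, ?_⟩
  · ext l
    simp only [Set.mem_setOf_eq, Set.mem_singleton_iff]
    constructor
    · rintro ⟨hlb, u, hu⟩
      have h1 := (eigen_char h hlb hu).1
      have h2 : FD (xp - xm) l = FD (xp - xm) Λ := by rw [h1, hΛ₂]
      exact (FD_strictMonoOn hd).injOn (Set.mem_Iio.mpr hlb) (Set.mem_Iio.mpr hΛ₁) h2
    · rintro rfl
      refine ⟨hΛ₁, (fun x => if x ≤ (xm + xp) / 2 then Sf l (x - xm) else Sf l (xp - x)), ?_⟩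
      have := eigen_exists h hΛ₁
      rwa [hΛ₂] at this
  · refine ⟨(fun x => if x ≤ (xm + xp) / 2 then Sf Λ (x - xm) else Sf Λ (xp - x)), ?_, ?_⟩
    · have := eigen_exists h hΛ₁
      rwa [hΛ₂] at this
    · intro u hu
      obtain ⟨_, A, hA, h1, h2⟩ := eigen_char h hΛ₁ hu
      refine ⟨A, fun x hx => ?_⟩
      show u x = A * (if x ≤ (xm + xp) / 2 then Sf Λ (x - xm) else Sf Λ (xp - x))
      by_cases hxy : x ≤ (xm + xp) / 2
      · rw [if_pos hxy]
        exact h1 x ⟨hx.1, hxy⟩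
      · rw [if_neg hxy]
        exact h2 x ⟨(not_le.mp hxy).le, hx.2⟩
  · intro α'
    exact ⟨(fun x => Sf ((2 * Real.pi / (xp - xm)) ^ 2) (x - xm)), eigen_exists_top h α'⟩
end
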